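/- Let τ > 0 and suppose every τ-grid image in η(α,1,d) is a misclassification aggregator with respect to τ/2, i.e., for every τ-grid image α₁ and every α₂ with ‖α₂ − α₁‖₁ ≤ τ/2, if N(α₂) ≠ N(α) then N(α₁) ≠ N(α). If no τ-grid image in η(α,1,d) is misclassified (all are classified as N(α)), then no image in η(α,1,d) is misclassified, i.e., adv(α) = ∅. -/
import Mathlib


/-- If every τ-grid image in the L1 ball η(α,1,d) is a misclassification
aggregator w.r.t. τ/2, the grid covers the ball (every point is within L1 distance τ/2
of a τ-grid image of the ball), and no τ-grid image in the ball is misclassified,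
then no image in the ball is misclassified. -/
theorem grid_safety_implies_safety
    {n : ℕ} {C : Type*} (N : (Fin n → ℝ) → C)
    (α : Fin n → ℝ) (d τ : ℝ) (hd : 0 < d) (hτ : 0 < τ)
    (grid : (Fin n → ℝ) → Prop)
    (hgrid : ∀ x, grid x ↔ (∑ p, |x p - α p| ≤ d ∧
        ∀ p, ∃ m : ℕ, |x p - α p| = m * τ))
    (hAgg : ∀ α₁, grid α₁ → ∀ α₂ : Fin n → ℝ,
        (∑ p, |α₂ p - α₁ p|) ≤ τ / 2 → N α₂ ≠ N α → N α₁ ≠ N α)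
    (hCover : ∀ α' : Fin n → ℝ, (∑ p, |α' p - α p|) ≤ d →
        ∃ α₁, grid α₁ ∧ (∑ p, |α' p - α₁ p|) ≤ τ / 2)
    (hGridSafe : ∀ α₁, grid α₁ → N α₁ = N α) :
    ∀ α' : Fin n → ℝ, (∑ p, |α' p - α p|) ≤ d → N α' = N α := by
  intro α' h
  obtain ⟨α₁, hg, hd1⟩ := hCover α' h
  by_contra hne
  exact hAgg α₁ hg α' hd1 hne (hGridSafe α₁ hg)
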